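/- For n ≥ 2 and 1 ≤ k < n, the ∃-generalized context K^k_{n,ge} = (S_n ∪ {g_1}, S_n ∪ {m_12}, J), obtained from K^k_n by replacing m_1 and m_2 with a single attribute m_12 whose extension is m_1' ∪ m_2' = S_n, is isomorphic to the context (S_{n+1}, S_{n+1}, ≠) (identifying g_1 and m_12 with n+1), and hence has exactly 2^{n+1} formal concepts. -/

import Mathlib

/-- The intent (attribute derivation) of a set of objects. -/
def intentOf {G M : Type*} (I : G → M → Prop) (A : Set G) : Set M :=
  {m | ∀ g ∈ A, I g m}

/-- The extent (object derivation) of a set of attributes. -/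
def extentOf {G M : Type*} (I : G → M → Prop) (B : Set M) : Set G :=
  {g | ∀ m ∈ B, I g m}

/-- The formal concepts of a context: pairs `(A, B)` with `A' = B` and `B' = A`. -/
def Concepts {G M : Type*} (I : G → M → Prop) : Set (Set G × Set M) :=
  {p | intentOf I p.1 = p.2 ∧ extentOf I p.2 = p.1}

/-- The ∃-generalized context `K^k_{n,ge} = (S_n ∪ {g_1}, S_n ∪ {m_12}, J)`:
objects are `Fin n ⊕ Unit` (with `Sum.inr () = g_1`), attributes are
`Fin n ⊕ Unit` (with `Sum.inr () = m_12`); `J` agrees with the incidence of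
`K^k_n` on the attributes in `S_n`, and the extension of `m_12` is
`m_1' ∪ m_2' = S_n` (this is the same context for every `1 ≤ k < n`). -/
def Kge (n : ℕ) : (Fin n ⊕ Unit) → (Fin n ⊕ Unit) → Prop
  | Sum.inl g, Sum.inl m => g ≠ m
  | Sum.inr _, Sum.inl _ => True
  | Sum.inl _, Sum.inr _ => True
  | Sum.inr _, Sum.inr _ => False

/-!
In the ∃-generalized context `g_1` and `m_12` play exactly the role of a new element `n+1` of
`S_{n+1}`: `g_1` has every attribute but `m_12`, and `m_12` is had by every object but `g_1`. So the
incidence is plain inequality on `S_n ∪ {n+1}`. In the context `(G, G, ≠)` the derivation of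
any set is its complement, so the concepts are exactly the pairs `(A, Aᶜ)`, one for each of the
`2 ^ |G|` subsets `A`.
-/

section Inequality

variable {G : Type*}

theorem intentOf_ne (A : Set G) : intentOf (fun g m : G => g ≠ m) A = Aᶜ := by
  ext m
  simp only [intentOf, Set.mem_ofPred_eq, Set.mem_compl_iff]
  exact ⟨fun h hm => h m hm rfl, fun h g hg hgm => h (hgm ▸ hg)⟩

theorem extentOf_ne (B : Set G) : extentOf (fun g m : G => g ≠ m) B = Bᶜ := by
  ext g
  simp only [extentOf, Set.mem_ofPred_eq, Set.mem_compl_iff]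
  exact ⟨fun h hg => h g hg rfl, fun h m hm hgm => h (hgm ▸ hm)⟩

theorem mem_concepts_ne_iff {p : Set G × Set G} :
    p ∈ Concepts (fun g m : G => g ≠ m) ↔ p.2 = p.1ᶜ := by
  simp only [Concepts, Set.mem_ofPred_eq, intentOf_ne, extentOf_ne]
  exact ⟨fun h => h.1.symm, fun h => ⟨h.symm, by rw [h, compl_compl]⟩⟩

def conceptsNeEquiv : Concepts (fun g m : G => g ≠ m) ≃ Set G where
  toFun p := p.1.1
  invFun A := ⟨(A, Aᶜ), mem_concepts_ne_iff.2 rfl⟩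
  left_inv := fun ⟨⟨A, B⟩, hp⟩ => by obtain rfl : B = Aᶜ := mem_concepts_ne_iff.1 hp; rfl
  right_inv _ := rfl

theorem card_concepts_ne [Fintype G] :
    Nat.card (Concepts (fun g m : G => g ≠ m)) = 2 ^ Fintype.card G := by
  rw [Nat.card_congr conceptsNeEquiv, Nat.card_eq_fintype_card, Fintype.card_set]

end Inequality

theorem kge_eq_ne (n : ℕ) : Kge n = fun g m => g ≠ m := by
  ext (g | g) (m | m) <;> simp [Kge]

def sumUnitEquivFinSucc (n : ℕ) : (Fin n ⊕ Unit) ≃ Fin (n + 1) :=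
  (Equiv.optionEquivSumPUnit (Fin n)).symm.trans finSuccEquivLast.symm

theorem sumUnitEquivFinSucc_inr (n : ℕ) : sumUnitEquivFinSucc n (Sum.inr ()) = Fin.last n :=
  rfl

theorem stmt10_general (n : ℕ) :
    (∃ (e : (Fin n ⊕ Unit) ≃ Fin (n + 1)) (f : (Fin n ⊕ Unit) ≃ Fin (n + 1)),
        e (Sum.inr ()) = Fin.last n ∧ f (Sum.inr ()) = Fin.last n ∧
        ∀ g m, Kge n g m ↔ e g ≠ f m) ∧
    Nat.card (Concepts (Kge n)) = 2 ^ (n + 1) := by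
  rw [kge_eq_ne]
  refine ⟨⟨sumUnitEquivFinSucc n, sumUnitEquivFinSucc n, sumUnitEquivFinSucc_inr n,
    sumUnitEquivFinSucc_inr n, fun g m => (sumUnitEquivFinSucc n).injective.ne_iff.symm⟩, ?_⟩
  rw [card_concepts_ne, Fintype.card_sum, Fintype.card_fin, Fintype.card_unit]

/-- For `n ≥ 2` and `1 ≤ k < n`, the ∃-generalized context `K^k_{n,ge}` is
isomorphic to `(S_{n+1}, S_{n+1}, ≠)` — via bijections of objects and of
attributes preserving and reflecting incidence and sending `g_1` and `m_12`
to `n+1` — and hence has exactly `2^(n+1)` formal concepts. -/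
theorem stmt10 (n k : ℕ) (hn : 2 ≤ n) (hk1 : 1 ≤ k) (hkn : k < n) :
    (∃ (e : (Fin n ⊕ Unit) ≃ Fin (n + 1)) (f : (Fin n ⊕ Unit) ≃ Fin (n + 1)),
        e (Sum.inr ()) = Fin.last n ∧ f (Sum.inr ()) = Fin.last n ∧
        ∀ g m, Kge n g m ↔ e g ≠ f m) ∧
    Nat.card (Concepts (Kge n)) = 2 ^ (n + 1) :=
  stmt10_general n
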